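/- arXiv:2405.00172 — 5 statements merged into one kernel-verified Lean document; each statement's English description precedes it below -/
import Mathlib

section
/- Let X_1,…,X_n ∈ ℝ^d satisfy ⟨X_i, X_j⟩ > 0 for all i, j ∈ {1,…,n}, let η > 0, and let N(1),…,N(n) be nonempty subsets of {1,…,n}. Define the positive-only (attraction) gradient-descent update X_i' = X_i + η ∑_{k ∈ N(i)} σ(−⟨X_i, X_k⟩) X_k for each i. Then ⟨X_i', X_j'⟩ > ⟨X_i, X_j⟩ for every pair i, j. -/
open RealInnerProductSpace BigOperators

/-- The logistic sigmoid function `σ(x) = 1 / (1 + exp (-x))`. -/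
noncomputable def sigmoid (x : ℝ) : ℝ := 1 / (1 + Real.exp (-x))

lemma sigmoid_pos (x : ℝ) : 0 < sigmoid x := by
  unfold sigmoid; positivity

/-- If all pairwise inner products of the embeddings `X i ∈ ℝ^d` are positive, `η > 0`, the
neighborhoods `N i` are nonempty, and `X' i = X i + η ∑_{k ∈ N i} σ(-⟨X i, X k⟩) X k` is the
positive-only (attraction) gradient-descent update, then every pairwise inner product strictly
increases: `⟨X' i, X' j⟩ > ⟨X i, X j⟫`. -/
theorem inner_strict_increase_of_positive_update {ι : Type*} [Fintype ι] {d : ℕ}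
    (X X' : ι → EuclideanSpace ℝ (Fin d))
    (hpos : ∀ i j, 0 < ⟪X i, X j⟫)
    (η : ℝ) (hη : 0 < η)
    (N : ι → Finset ι) (hN : ∀ i, (N i).Nonempty)
    (hupd : ∀ i, X' i = X i + η • ∑ k ∈ N i, sigmoid (-⟪X i, X k⟫) • X k) :
    ∀ i j, ⟪X i, X j⟫ < ⟪X' i, X' j⟫ := by
  intro i j
  set Si : EuclideanSpace ℝ (Fin d) := ∑ k ∈ N i, sigmoid (-⟪X i, X k⟫) • X k with hSi
  set Sj : EuclideanSpace ℝ (Fin d) := ∑ k ∈ N j, sigmoid (-⟪X j, X k⟫) • X k with hSj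
  have hright : ∀ (v : EuclideanSpace ℝ (Fin d)), (∀ k, 0 < ⟪v, X k⟫) →
      ∀ m, 0 < ⟪v, ∑ k ∈ N m, sigmoid (-⟪X m, X k⟫) • X k⟫ := by
    intro v hv m
    rw [inner_sum]
    apply Finset.sum_pos _ (hN m)
    intro k _
    rw [real_inner_smul_right]
    exact mul_pos (sigmoid_pos _) (hv k)
  have h1 : 0 < ⟪X i, Sj⟫ := hright (X i) (fun k => hpos i k) j
  have h2 : 0 < ⟪Si, X j⟫ := by
    rw [real_inner_comm]
    exact hright (X j) (fun k => hpos j k) i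
  have h3 : 0 < ⟪Si, Sj⟫ := by
    rw [hSi, sum_inner]
    apply Finset.sum_pos _ (hN i)
    intro k _
    rw [real_inner_smul_left]
    exact mul_pos (sigmoid_pos _) (hright (X k) (fun l => hpos k l) j)
  rw [hupd i, hupd j, ← hSi, ← hSj]
  have hexp : ⟪X i + η • Si, X j + η • Sj⟫ =
      ⟪X i, X j⟫ + η * ⟪X i, Sj⟫ + η * ⟪Si, X j⟫ + η * (η * ⟪Si, Sj⟫) := by
    simp only [inner_add_left, inner_add_right, real_inner_smul_left, real_inner_smul_right]
    ring
  rw [hexp]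
  nlinarith [mul_pos hη h1, mul_pos hη h2, mul_pos hη (mul_pos hη h3)]
end

section
/- Let N(1),…,N(n) be nonempty subsets of {1,…,n}, let η > 0, and let X^(0) = (X_1^(0),…,X_n^(0)) be vectors in ℝ^d whose constriction is positive, i.e., min_{i,j} ⟨X_i^(0), X_j^(0)⟩ > 0. Define iterates by X_i^(t+1) = X_i^(t) + η ∑_{k ∈ N(i)} σ(−⟨X_i^(t), X_k^(t)⟩) X_k^(t). Then the constriction 𝒞(X^(t)) = min_{i,j} ⟨X_i^(t), X_j^(t)⟩ is positive for every t ≥ 0 and is strictly monotonically increasing in t. (This is the asymptotic phase of the guaranteed-collapse result: once constriction becomes positive, positive-only skip-gram updates make it increase monotonically.) -/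
open RealInnerProductSpace BigOperators

/-- Positive-only skip-gram updates: if the constriction `C t = min_{i,j} ⟨X t i, X t j⟩` is
positive at `t = 0`, then it is positive for all `t` and strictly monotonically increasing. -/
theorem constriction_pos_and_strictMono_of_positive_updates
    {ι : Type*} [Fintype ι] [Nonempty ι] {d : ℕ}
    (η : ℝ) (hη : 0 < η)
    (N : ι → Finset ι) (hN : ∀ i, (N i).Nonempty)
    (X : ℕ → ι → EuclideanSpace ℝ (Fin d))
    (hupd : ∀ t i, X (t + 1) i
      = X t i + η • ∑ k ∈ N i, sigmoid (-⟪X t i, X t k⟫) • X t k)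
    (C : ℕ → ℝ)
    (hC : ∀ t, C t = Finset.univ.inf' Finset.univ_nonempty
      (fun p : ι × ι => ⟪X t p.1, X t p.2⟫))
    (h0 : 0 < C 0) :
    (∀ t, 0 < C t) ∧ StrictMono C := by
  have key : ∀ t, 0 < C t → C t < C (t + 1) := by
    intro t ht
    have hle : ∀ i j : ι, C t ≤ ⟪X t i, X t j⟫ := by
      intro i j
      rw [hC t]
      exact Finset.inf'_le _ (Finset.mem_univ (i, j))
    have hpos : ∀ i j : ι, (0:ℝ) < ⟪X t i, X t j⟫ := fun i j => lt_of_lt_of_le ht (hle i j)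
    set S : ι → EuclideanSpace ℝ (Fin d) :=
      fun i => η • ∑ k ∈ N i, sigmoid (-⟪X t i, X t k⟫) • X t k with hS
    have hSr : ∀ i j : ι, (0:ℝ) < ⟪X t i, S j⟫ := by
      intro i j
      rw [hS]
      simp only [real_inner_smul_right, inner_sum]
      refine mul_pos hη (Finset.sum_pos ?_ (hN j))
      intro k _
      exact mul_pos (sigmoid_pos _) (hpos i k)
    have hSl : ∀ i j : ι, (0:ℝ) < ⟪S i, X t j⟫ := by
      intro i j
      rw [real_inner_comm]
      exact hSr j i
    have hSS : ∀ i j : ι, (0:ℝ) < ⟪S i, S j⟫ := by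
      intro i j
      have : ⟪S i, S j⟫ = η * ∑ k ∈ N i, sigmoid (-⟪X t i, X t k⟫) * ⟪X t k, S j⟫ := by
        rw [hS]
        simp only [real_inner_smul_left, sum_inner]
      rw [this]
      refine mul_pos hη (Finset.sum_pos ?_ (hN i))
      intro k _
      exact mul_pos (sigmoid_pos _) (hSr k j)
    have hstep : ∀ p : ι × ι, C t < ⟪X (t+1) p.1, X (t+1) p.2⟫ := by
      intro p
      rw [hupd t p.1, hupd t p.2]
      have expand : ⟪X t p.1 + S p.1, X t p.2 + S p.2⟫
          = ⟪X t p.1, X t p.2⟫ + ⟪X t p.1, S p.2⟫ + ⟪S p.1, X t p.2⟫ + ⟪S p.1, S p.2⟫ := by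
        simp only [inner_add_left, inner_add_right]; ring
      rw [show X t p.1 + η • ∑ k ∈ N p.1, sigmoid (-⟪X t p.1, X t k⟫) • X t k
            = X t p.1 + S p.1 from rfl,
          show X t p.2 + η • ∑ k ∈ N p.2, sigmoid (-⟪X t p.2, X t k⟫) • X t k
            = X t p.2 + S p.2 from rfl, expand]
      have := hle p.1 p.2
      have := hSr p.1 p.2
      have := hSl p.1 p.2
      have := hSS p.1 p.2
      linarith
    rw [hC (t+1)]
    rw [Finset.lt_inf'_iff]
    intro p _
    exact hstep p
  have hall : ∀ t, 0 < C t := by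
    intro t
    induction t with
    | zero => exact h0
    | succ n ih => exact ih.trans (key n ih)
  exact ⟨hall, strictMono_nat_of_lt_succ fun n => key n (hall n)⟩
end

section
/- Let X_1,…,X_n ∈ ℝ^d satisfy ‖X_j‖² ≤ β for all j and ⟨X_i, X_j⟩ ≥ C for all i, j. Then for every i, ‖∑_{j=1}^n (σ(⟨X_i, X_j⟩) − 1) X_j‖ ≤ n · exp(−C) · √β. That is, the i-th row of the difference between the all-to-all skip-gram repulsion field K X (with K_{ij} = σ(⟨X_i, X_j⟩)) and the dimension-mean regularization field 𝟏 X (whose i-th row is ∑_j X_j) has norm at most n e^{−C} √β. -/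
open RealInnerProductSpace BigOperators

theorem sigmoid_sub_one (x : ℝ) :
    sigmoid x - 1 = -(Real.exp (-x) / (1 + Real.exp (-x))) := by
  have hpos : 0 < 1 + Real.exp (-x) := by positivity
  rw [sigmoid, div_sub_one hpos.ne']
  ring

theorem abs_sigmoid_sub_one_le (x : ℝ) : |sigmoid x - 1| ≤ Real.exp (-x) := by
  rw [sigmoid_sub_one, abs_neg, abs_of_nonneg (by positivity)]
  exact div_le_self (Real.exp_pos _).le (by linarith [Real.exp_pos (-x)])

theorem norm_sum_smul_le_card_mul {ι E : Type*} [Fintype ι] [SeminormedAddCommGroup E]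
    [NormedSpace ℝ E] {c : ι → ℝ} {v : ι → E} {a b : ℝ}
    (hc : ∀ j, |c j| ≤ a) (hv : ∀ j, ‖v j‖ ≤ b) :
    ‖∑ j, c j • v j‖ ≤ Fintype.card ι * a * b := by
  calc ‖∑ j, c j • v j‖
      ≤ ∑ _j : ι, a * b := norm_sum_le_of_le _ fun j _ => by
        rw [norm_smul, Real.norm_eq_abs]
        exact mul_le_mul (hc j) (hv j) (norm_nonneg _) ((abs_nonneg _).trans (hc j))
    _ = Fintype.card ι * a * b := by
        rw [Finset.sum_const, Finset.card_univ, nsmul_eq_mul, mul_assoc]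

theorem row_diff_norm_le_general {n d : ℕ} (X : Fin n → EuclideanSpace ℝ (Fin d))
    (β C : ℝ)
    (hnorm : ∀ j, ‖X j‖ ^ 2 ≤ β)
    (hconstr : ∀ i j, C ≤ ⟪X i, X j⟫) :
    ∀ i, ‖∑ j, (sigmoid ⟪X i, X j⟫ - 1) • X j‖ ≤ n * Real.exp (-C) * Real.sqrt β := by
  intro i
  have hcoef : ∀ j, |sigmoid ⟪X i, X j⟫ - 1| ≤ Real.exp (-C) := fun j =>
    (abs_sigmoid_sub_one_le _).trans (Real.exp_le_exp.2 (neg_le_neg (hconstr i j)))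
  have hvec : ∀ j, ‖X j‖ ≤ Real.sqrt β := fun j => Real.le_sqrt_of_sq_le (hnorm j)
  simpa only [Fintype.card_fin] using norm_sum_smul_le_card_mul hcoef hvec

/-- If `‖X j‖² ≤ β` for all `j` and `⟨X i, X j⟩ ≥ C` for all `i, j`, then for every `i`,
`‖∑ j, (σ(⟨X i, X j⟩) - 1) X j‖ ≤ n · exp(-C) · √β`. -/
theorem row_diff_norm_le {n d : ℕ} (X : Fin n → EuclideanSpace ℝ (Fin d))
    (β C : ℝ) (hβ : 0 < β)
    (hnorm : ∀ j, ‖X j‖ ^ 2 ≤ β)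
    (hconstr : ∀ i j, C ≤ ⟪X i, X j⟫) :
    ∀ i, ‖∑ j, (sigmoid ⟪X i, X j⟫ - 1) • X j‖ ≤ n * Real.exp (-C) * Real.sqrt β :=
  row_diff_norm_le_general X β C hnorm hconstr
end

section
/- Let C > 0 and β > 0, and let X_1,…,X_n ∈ ℝ^d satisfy ⟨X_i, X_j⟩ ≥ C for all i, j and ‖X_i‖² ≤ β for all i. Then for any subsets A_1,…,A_n of {1,…,n}, ∑_{i=1}^n ‖∑_{j ∈ A_i} σ(⟨X_i, X_j⟩) X_j‖² ≥ (σ(C)² C² / β) · ∑_{i=1}^n |A_i|². (This lower-bounds the squared Frobenius norm of the skip-gram repulsion gradient restricted to any collection of node pairs, e.g., the negative pairs {j : S_{ij} = 0}.) -/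
open RealInnerProductSpace BigOperators

lemma sigmoid_mono {x y : ℝ} (h : x ≤ y) : sigmoid x ≤ sigmoid y := by
  unfold sigmoid
  apply one_div_le_one_div_of_le
  · positivity
  · have := Real.exp_le_exp.mpr (neg_le_neg h)
    linarith

/-- If `C > 0`, `⟨X i, X j⟩ ≥ C` for all `i, j`, and `‖X i‖² ≤ β` for all `i`, then for any
subsets `A i ⊆ {1,…,n}`,
`∑ i, ‖∑_{j ∈ A i} σ(⟨X i, X j⟩) X j‖² ≥ (σ(C)² C² / β) · ∑ i, |A i|²`. -/
theorem grad_sq_lower_bound {n d : ℕ} (C β : ℝ) (hC : 0 < C) (hβ : 0 < β)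
    (X : Fin n → EuclideanSpace ℝ (Fin d))
    (hconstr : ∀ i j, C ≤ ⟪X i, X j⟫)
    (hnorm : ∀ i, ‖X i‖ ^ 2 ≤ β)
    (A : Fin n → Finset (Fin n)) :
    (sigmoid C) ^ 2 * C ^ 2 / β * ∑ i, ((A i).card : ℝ) ^ 2
      ≤ ∑ i, ‖∑ j ∈ A i, sigmoid ⟪X i, X j⟫ • X j‖ ^ 2 := by
  rw [Finset.mul_sum]
  apply Finset.sum_le_sum
  intro i _
  set v := ∑ j ∈ A i, sigmoid ⟪X i, X j⟫ • X j with hv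
  have hsC : 0 < sigmoid C := sigmoid_pos C
  -- inner product lower bound
  have hinner : sigmoid C * C * (A i).card ≤ ⟪X i, v⟫ := by
    rw [hv, inner_sum]
    have : ∀ j ∈ A i, sigmoid C * C ≤ ⟪X i, sigmoid ⟪X i, X j⟫ • X j⟫ := by
      intro j _
      rw [real_inner_smul_right]
      exact mul_le_mul (sigmoid_mono (hconstr i j)) (hconstr i j) hC.le
        (sigmoid_pos _).le
    calc sigmoid C * C * (A i).card
        = ∑ _j ∈ A i, sigmoid C * C := by rw [Finset.sum_const, nsmul_eq_mul]; ring
      _ ≤ _ := Finset.sum_le_sum this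
  have hinner_pos : 0 ≤ sigmoid C * C * (A i).card := by positivity
  -- Cauchy-Schwarz
  have hcs : ⟪X i, v⟫ ≤ ‖X i‖ * ‖v‖ := real_inner_le_norm _ _
  have hsq : (sigmoid C * C * (A i).card) ^ 2 ≤ β * ‖v‖ ^ 2 := by
    have h1 : (sigmoid C * C * (A i).card) ^ 2 ≤ (‖X i‖ * ‖v‖) ^ 2 :=
      pow_le_pow_left₀ hinner_pos (hinner.trans hcs) 2
    have h2 : (‖X i‖ * ‖v‖) ^ 2 ≤ β * ‖v‖ ^ 2 := by
      rw [mul_pow]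
      exact mul_le_mul_of_nonneg_right (hnorm i) (by positivity)
    linarith
  rw [div_mul_eq_mul_div, div_le_iff₀ hβ]
  calc sigmoid C ^ 2 * C ^ 2 * ((A i).card : ℝ) ^ 2
      = (sigmoid C * C * (A i).card) ^ 2 := by ring
    _ ≤ β * ‖v‖ ^ 2 := hsq
    _ = ‖v‖ ^ 2 * β := by ring
end

section
/- Let C > 0, β > 0, and integers 0 ≤ Δ < n. Let X_1,…,X_n ∈ ℝ^d satisfy ⟨X_i, X_j⟩ ≥ C for all i, j and ‖X_i‖² ≤ β for all i, and let S ∈ {0,1}^{n×n} be a similarity matrix whose rows each contain at most Δ ones, i.e., |{j : S_{ij} = 1}| ≤ Δ for every i. Then the ratio of the squared Frobenius norm of the gradient difference to the squared Frobenius norm of the negative-pairs gradient satisfies (∑_{i=1}^n ‖∑_{j : S_{ij} = 1} σ(⟨X_i, X_j⟩) X_j‖²) / (∑_{i=1}^n ‖∑_{j : S_{ij} = 0} σ(⟨X_i, X_j⟩) X_j‖²) ≤ β² Δ² / (σ(C)² C² (n − Δ)²); in particular the denominator is positive, and for fixed C, β, Δ the ratio tends to 0 as n → ∞. -/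
open RealInnerProductSpace BigOperators

lemma sigmoid_le_one (x : ℝ) : sigmoid x ≤ 1 := by
  unfold sigmoid
  rw [div_le_one (by positivity)]
  nlinarith [Real.exp_pos (-x)]

/-- For embeddings with constriction at least `C > 0`, squared norms at most `β`, and a binary
similarity matrix `S` with at most `Δ < n` ones per row, the ratio of the squared Frobenius norm
of the gradient difference `∇N'_SG - ∇N_SG` (rows summed over positive pairs `S i j = true`) to
the squared Frobenius norm of `∇N_SG` (rows summed over negative pairs `S i j = false`) is at
most `β² Δ² / (σ(C)² C² (n - Δ)²)`; in particular the denominator is positive. -/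
theorem grad_ratio_le {n d : ℕ} (C β : ℝ) (hC : 0 < C) (hβ : 0 < β)
    (Δ : ℕ) (hΔn : Δ < n)
    (X : Fin n → EuclideanSpace ℝ (Fin d))
    (hconstr : ∀ i j, C ≤ ⟪X i, X j⟫)
    (hnorm : ∀ i, ‖X i‖ ^ 2 ≤ β)
    (S : Fin n → Fin n → Bool)
    (hrow : ∀ i, (Finset.univ.filter fun j => S i j = true).card ≤ Δ) :
    0 < ∑ i, ‖∑ j ∈ Finset.univ.filter (fun j => S i j = false),
        sigmoid ⟪X i, X j⟫ • X j‖ ^ 2 ∧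
    (∑ i, ‖∑ j ∈ Finset.univ.filter (fun j => S i j = true),
        sigmoid ⟪X i, X j⟫ • X j‖ ^ 2) /
      (∑ i, ‖∑ j ∈ Finset.univ.filter (fun j => S i j = false),
        sigmoid ⟪X i, X j⟫ • X j‖ ^ 2)
      ≤ β ^ 2 * (Δ : ℝ) ^ 2 / ((sigmoid C) ^ 2 * C ^ 2 * ((n : ℝ) - Δ) ^ 2) := by
  have hσC := sigmoid_pos C
  have hnΔ : (0:ℝ) < (n:ℝ) - Δ := by
    have := (Nat.cast_lt (α := ℝ)).mpr hΔn; linarith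
  have hXle : ∀ i : Fin n, ‖X i‖ ≤ Real.sqrt β := fun i =>
    (Real.le_sqrt (norm_nonneg _) hβ.le).mpr (hnorm i)
  -- numerator per-row bound
  have hA : ∀ i, ‖∑ j ∈ Finset.univ.filter (fun j => S i j = true),
      sigmoid ⟪X i, X j⟫ • X j‖ ^ 2 ≤ β * (Δ:ℝ) ^ 2 := by
    intro i
    have h1 : ‖∑ j ∈ Finset.univ.filter (fun j => S i j = true),
        sigmoid ⟪X i, X j⟫ • X j‖ ≤ (Δ:ℝ) * Real.sqrt β := by
      calc ‖∑ j ∈ Finset.univ.filter (fun j => S i j = true),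
          sigmoid ⟪X i, X j⟫ • X j‖
          ≤ ∑ j ∈ Finset.univ.filter (fun j => S i j = true),
            ‖sigmoid ⟪X i, X j⟫ • X j‖ := norm_sum_le _ _
        _ ≤ ∑ j ∈ Finset.univ.filter (fun j => S i j = true), Real.sqrt β := by
            apply Finset.sum_le_sum
            intro j _
            rw [norm_smul, Real.norm_eq_abs,
              abs_of_pos (sigmoid_pos _)]
            calc sigmoid ⟪X i, X j⟫ * ‖X j‖ ≤ 1 * Real.sqrt β := by
                  apply mul_le_mul (sigmoid_le_one _) (hXle j) (norm_nonneg _) one_pos.le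
              _ = Real.sqrt β := one_mul _
        _ = ((Finset.univ.filter (fun j => S i j = true)).card : ℝ) * Real.sqrt β := by
            rw [Finset.sum_const, nsmul_eq_mul]
        _ ≤ (Δ:ℝ) * Real.sqrt β := by
            apply mul_le_mul_of_nonneg_right _ (Real.sqrt_nonneg β)
            exact_mod_cast hrow i
    calc ‖∑ j ∈ Finset.univ.filter (fun j => S i j = true),
        sigmoid ⟪X i, X j⟫ • X j‖ ^ 2 ≤ ((Δ:ℝ) * Real.sqrt β) ^ 2 :=
          pow_le_pow_left₀ (norm_nonneg _) h1 2
      _ = β * (Δ:ℝ) ^ 2 := by rw [mul_pow, Real.sq_sqrt hβ.le]; ring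
  -- denominator per-row bound
  have hB : ∀ i, ((n:ℝ) - Δ) ^ 2 * sigmoid C ^ 2 * C ^ 2 / β ≤
      ‖∑ j ∈ Finset.univ.filter (fun j => S i j = false),
        sigmoid ⟪X i, X j⟫ • X j‖ ^ 2 := by
    intro i
    set v := ∑ j ∈ Finset.univ.filter (fun j => S i j = false),
        sigmoid ⟪X i, X j⟫ • X j with hv
    have hcard : (n:ℝ) - Δ ≤ ((Finset.univ.filter (fun j => S i j = false)).card : ℝ) := by
      have hsplit := Finset.card_filter_add_card_filter_not
        (s := (Finset.univ : Finset (Fin n))) (p := fun j => S i j = true)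
      have heq : (Finset.univ.filter (fun j => ¬ S i j = true)) =
          (Finset.univ.filter (fun j => S i j = false)) := by
        apply Finset.filter_congr; intro j _; simp
      rw [heq, Finset.card_univ, Fintype.card_fin] at hsplit
      have h1 := hrow i
      have : n - Δ ≤ (Finset.univ.filter (fun j => S i j = false)).card := by omega
      have := (Nat.cast_le (α := ℝ)).mpr this
      calc (n:ℝ) - Δ ≤ ((n - Δ : ℕ) : ℝ) := by
            rw [Nat.cast_sub hΔn.le]
        _ ≤ _ := this
    have hinner : ((n:ℝ) - Δ) * (sigmoid C * C) ≤ ⟪X i, v⟫ := by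
      rw [hv, inner_sum]
      have : ∀ j ∈ Finset.univ.filter (fun j => S i j = false),
          sigmoid C * C ≤ ⟪X i, sigmoid ⟪X i, X j⟫ • X j⟫ := by
        intro j _
        rw [real_inner_smul_right]
        exact mul_le_mul (sigmoid_mono (hconstr i j)) (hconstr i j) hC.le
          (sigmoid_pos _).le
      calc ((n:ℝ) - Δ) * (sigmoid C * C)
          ≤ ((Finset.univ.filter (fun j => S i j = false)).card : ℝ) * (sigmoid C * C) :=
            mul_le_mul_of_nonneg_right hcard (by positivity)
        _ = ∑ _j ∈ Finset.univ.filter (fun j => S i j = false), sigmoid C * C := by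
            rw [Finset.sum_const, nsmul_eq_mul]
        _ ≤ _ := Finset.sum_le_sum this
    have hcs : ⟪X i, v⟫ ≤ ‖X i‖ * ‖v‖ := real_inner_le_norm _ _
    have hXi2 := hnorm i
    have hvnn : (0:ℝ) ≤ ‖v‖ := norm_nonneg _
    have hXinn : (0:ℝ) ≤ ‖X i‖ := norm_nonneg _
    rw [div_le_iff₀ hβ]
    nlinarith [sq_nonneg ⟪X i, v⟫, mul_pos (mul_pos hnΔ hσC) hC]
  -- sum bounds
  have hAsum : (∑ i, ‖∑ j ∈ Finset.univ.filter (fun j => S i j = true),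
      sigmoid ⟪X i, X j⟫ • X j‖ ^ 2) ≤ (n:ℝ) * (β * (Δ:ℝ) ^ 2) := by
    calc _ ≤ ∑ _i : Fin n, β * (Δ:ℝ) ^ 2 := Finset.sum_le_sum (fun i _ => hA i)
      _ = (n:ℝ) * (β * (Δ:ℝ) ^ 2) := by
        rw [Finset.sum_const, Finset.card_univ, Fintype.card_fin, nsmul_eq_mul]
  have hBsum : (n:ℝ) * (((n:ℝ) - Δ) ^ 2 * sigmoid C ^ 2 * C ^ 2 / β) ≤
      ∑ i, ‖∑ j ∈ Finset.univ.filter (fun j => S i j = false),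
        sigmoid ⟪X i, X j⟫ • X j‖ ^ 2 := by
    calc (n:ℝ) * (((n:ℝ) - Δ) ^ 2 * sigmoid C ^ 2 * C ^ 2 / β)
        = ∑ _i : Fin n, ((n:ℝ) - Δ) ^ 2 * sigmoid C ^ 2 * C ^ 2 / β := by
          rw [Finset.sum_const, Finset.card_univ, Fintype.card_fin, nsmul_eq_mul]
      _ ≤ _ := Finset.sum_le_sum (fun i _ => hB i)
  have hn0 : (0:ℝ) < n := Nat.cast_pos.mpr (Nat.lt_of_le_of_lt (Nat.zero_le _) hΔn)
  have hD : (0:ℝ) < (n:ℝ) * (((n:ℝ) - Δ) ^ 2 * sigmoid C ^ 2 * C ^ 2 / β) := by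
    positivity
  have hBpos : (0:ℝ) < ∑ i, ‖∑ j ∈ Finset.univ.filter (fun j => S i j = false),
      sigmoid ⟪X i, X j⟫ • X j‖ ^ 2 := lt_of_lt_of_le hD hBsum
  refine ⟨hBpos, ?_⟩
  calc (∑ i, ‖∑ j ∈ Finset.univ.filter (fun j => S i j = true),
        sigmoid ⟪X i, X j⟫ • X j‖ ^ 2) /
      (∑ i, ‖∑ j ∈ Finset.univ.filter (fun j => S i j = false),
        sigmoid ⟪X i, X j⟫ • X j‖ ^ 2)
      ≤ ((n:ℝ) * (β * (Δ:ℝ) ^ 2)) /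
        ((n:ℝ) * (((n:ℝ) - Δ) ^ 2 * sigmoid C ^ 2 * C ^ 2 / β)) :=
        div_le_div₀ (by positivity) hAsum hD hBsum
    _ = β ^ 2 * (Δ : ℝ) ^ 2 / ((sigmoid C) ^ 2 * C ^ 2 * ((n : ℝ) - Δ) ^ 2) := by
        rw [div_eq_div_iff (by positivity) (by positivity)]
        field_simp
end
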